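/- Let G be a connected graph, {F₁,...,F_r} a partition of E(G) satisfying the distance decomposition d_G(u,v) = Σᵢ d_{G/Fᵢ}(ℓᵢ(u),ℓᵢ(v)) for all u,v. Then the degree distance satisfies DD(G) = Σ_{i=1}^r W(G/Fᵢ, aᵢ, bᵢ), where for each component C of G ∖ Fᵢ, aᵢ(C) = Σ_{x∈C} deg_G(x) and bᵢ(C) = |V(C)|. -/

import Mathlib

open Finset
open scoped Classical

noncomputable section

variable {V : Type*}

noncomputable instance fintypeCC [Fintype V] (G : SimpleGraph V) : Fintype G.ConnectedComponent :=
  @Fintype.ofFinite _ (Finite.of_surjective G.connectedComponentMk fun C => C.exists_rep)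

noncomputable def SimpleGraph.wienerDW [Fintype V] (G : SimpleGraph V) (a b : V → ℝ) : ℝ :=
  (1 / 2) * ∑ u : V, ∑ v : V, (a u * b v + a v * b u) * (G.dist u v : ℝ)

/-- The degree of a vertex (as a real number). -/
noncomputable def SimpleGraph.degR (G : SimpleGraph V) (u : V) : ℝ :=
  Nat.card {w : V | G.Adj u w}

/-- The degree distance `DD(G) = ∑_{{u,v}⊆V(G)} (deg(u)+deg(v)) d(u,v)`. -/
noncomputable def SimpleGraph.degreeDistance [Fintype V] (G : SimpleGraph V) : ℝ :=
  (1 / 2) * ∑ u : V, ∑ v : V, (G.degR u + G.degR v) * (G.dist u v : ℝ)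

def SimpleGraph.quotientGraph (G : SimpleGraph V) (F : Set (Sym2 V)) :
    SimpleGraph (G.deleteEdges F).ConnectedComponent where
  Adj C D := C ≠ D ∧ ∃ u v : V, G.Adj u v ∧
    (G.deleteEdges F).connectedComponentMk u = C ∧ (G.deleteEdges F).connectedComponentMk v = D
  symm := by
    constructor
    rintro C D ⟨hne, u, v, h, hu, hv⟩
    exact ⟨hne.symm, v, u, h.symm, hv, hu⟩
  loopless := by constructor; rintro C ⟨hne, -⟩; exact hne rfl

/-!
Substituting the distance decomposition into `DD(G)` and exchanging sums writes `DD(G)` as a sum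
over `i` of sums over vertex pairs in which the distance depends only on `ℓᵢ(u)` and `ℓᵢ(v)`.
Grouping the vertices by their component (`fiberSum`) turns each of these into `W(G/Fᵢ, aᵢ, bᵢ)`.
-/

def fiberSum {α β R : Type*} [Fintype α] [DecidableEq β] [AddCommMonoid R]
    (ℓ : α → β) (a : α → R) (C : β) : R :=
  ∑ x, if ℓ x = C then a x else 0

theorem sum_fiberSum_mul {α β R : Type*} [Fintype α] [Fintype β] [DecidableEq β]
    [NonUnitalNonAssocSemiring R] (ℓ : α → β) (a : α → R) (f : β → R) :
    ∑ C, fiberSum ℓ a C * f C = ∑ x, a x * f (ℓ x) := by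
  simp_rw [fiberSum, Finset.sum_mul, ite_mul, zero_mul]
  rw [Finset.sum_comm]
  simp

theorem sum_sum_fiberSum_mul_fiberSum_mul {α β R : Type*} [Fintype α] [Fintype β]
    [DecidableEq β] [NonUnitalSemiring R] (ℓ : α → β) (a b : α → R) (d : β → β → R) :
    ∑ C, ∑ D, fiberSum ℓ a C * fiberSum ℓ b D * d C D =
      ∑ u, ∑ v, a u * b v * d (ℓ u) (ℓ v) := by
  calc ∑ C, ∑ D, fiberSum ℓ a C * fiberSum ℓ b D * d C D
      = ∑ C, fiberSum ℓ a C * ∑ v, b v * d C (ℓ v) := by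
        refine Finset.sum_congr rfl fun C _ => ?_
        simp_rw [mul_assoc, ← Finset.mul_sum, sum_fiberSum_mul]
    _ = ∑ u, ∑ v, a u * b v * d (ℓ u) (ℓ v) := by
        simp_rw [sum_fiberSum_mul, Finset.mul_sum, mul_assoc]

theorem SimpleGraph.wienerDW_fiberSum {α β : Type*} [Fintype α] [Fintype β] [DecidableEq β]
    (H : SimpleGraph β) (ℓ : α → β) (a b : α → ℝ) :
    H.wienerDW (fiberSum ℓ a) (fiberSum ℓ b) =
      (1 / 2) * ∑ u, ∑ v, (a u * b v + a v * b u) * (H.dist (ℓ u) (ℓ v) : ℝ) := by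
  have hab := sum_sum_fiberSum_mul_fiberSum_mul ℓ a b fun C D => (H.dist C D : ℝ)
  have hba := sum_sum_fiberSum_mul_fiberSum_mul ℓ b a fun C D => (H.dist C D : ℝ)
  simp only [mul_comm (fiberSum ℓ b _) (fiberSum ℓ a _), mul_comm (b _) (a _)] at hba
  simp only [SimpleGraph.wienerDW, add_mul, Finset.sum_add_distrib, hab, hba]

theorem degreeDistance_eq_sum_of_dist_eq_sum [Fintype V] {ι : Type*} [Fintype ι]
    (G : SimpleGraph V) (d : ι → V → V → ℕ) (hdist : ∀ u v, G.dist u v = ∑ i, d i u v) :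
    G.degreeDistance = ∑ i, (1 / 2) * ∑ u, ∑ v, (G.degR u + G.degR v) * (d i u v : ℝ) := by
  simp only [SimpleGraph.degreeDistance, hdist, Nat.cast_sum, Finset.mul_sum]
  conv_rhs => rw [Finset.sum_comm]
  exact Finset.sum_congr rfl fun u _ => Finset.sum_comm

theorem degreeDistance_eq_sum_quotients_general [Fintype V] (G : SimpleGraph V)
    (r : ℕ) (F : Fin r → Set (Sym2 V))
    (hdist : ∀ u v : V, G.dist u v =
      ∑ i, (G.quotientGraph (F i)).dist
        ((G.deleteEdges (F i)).connectedComponentMk u)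
        ((G.deleteEdges (F i)).connectedComponentMk v)) :
    G.degreeDistance = ∑ i, (G.quotientGraph (F i)).wienerDW
      (fun C => ∑ x : V, if (G.deleteEdges (F i)).connectedComponentMk x = C then G.degR x else 0)
      (fun C => ∑ x : V, if (G.deleteEdges (F i)).connectedComponentMk x = C then (1 : ℝ) else 0) := by
  rw [degreeDistance_eq_sum_of_dist_eq_sum G _ hdist]
  refine Finset.sum_congr rfl fun i _ => ?_
  have := (G.quotientGraph (F i)).wienerDW_fiberSum
    (G.deleteEdges (F i)).connectedComponentMk G.degR 1
  simp only [Pi.one_apply, mul_one] at this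
  exact this.symm

/-- If `G` is connected and `{F₁,…,F_r}` is a partition of `E(G)` satisfying the
distance decomposition, then `DD(G) = ∑ᵢ W(G/Fᵢ, aᵢ, bᵢ)` where, for a component `C` of `G∖Fᵢ`,
`aᵢ(C)` is the sum of the degrees (in `G`) of the vertices of `C` and `bᵢ(C) = |V(C)|`. -/
theorem degreeDistance_eq_sum_quotients [Fintype V] (G : SimpleGraph V) (hG : G.Connected)
    (r : ℕ) (F : Fin r → Set (Sym2 V))
    (hsub : ∀ i, F i ⊆ G.edgeSet)
    (hdisj : ∀ i j, i ≠ j → Disjoint (F i) (F j))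
    (hcover : ∀ e ∈ G.edgeSet, ∃ i, e ∈ F i)
    (hdist : ∀ u v : V, G.dist u v =
      ∑ i, (G.quotientGraph (F i)).dist
        ((G.deleteEdges (F i)).connectedComponentMk u)
        ((G.deleteEdges (F i)).connectedComponentMk v)) :
    G.degreeDistance = ∑ i, (G.quotientGraph (F i)).wienerDW
      (fun C => ∑ x : V, if (G.deleteEdges (F i)).connectedComponentMk x = C then G.degR x else 0)
      (fun C => ∑ x : V, if (G.deleteEdges (F i)).connectedComponentMk x = C then (1 : ℝ) else 0) :=
  degreeDistance_eq_sum_quotients_general G r F hdist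

end
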